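/- Let Σ be a finite alphabet, M : Σ → ℝ^{n×n}, M̃ : Σ → ℝ^{n̂×n̂}, and F ∈ ℝ^{n̂×n}. Let m > 0 and b ≥ 0 be such that ‖M(a)‖₂ ≤ m, ‖M̃(a)‖₂ ≤ m, and ‖F M(a) − M̃(a) F‖₂ ≤ b hold for all a ∈ Σ. Then for every nonempty word w ∈ Σ* of length |w|, ‖F M(w) − M̃(w) F‖₂ ≤ b · |w| · m^{|w|−1} (and for the empty word the left-hand side is 0). -/
import Mathlib

open Matrix

noncomputable section

/-- The matrix `M(w)` of a word: `M(ε) = I`, `M(a₁⋯a_k) = M(a₁)⋯M(a_k)`. -/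
def wordProd {S : Type*} {Γ : Type*} [Fintype S] [DecidableEq S]
    (M : Γ → Matrix S S ℝ) (w : List Γ) : Matrix S S ℝ :=
  (w.map M).prod

/-- The ℓ2 operator norm (spectral norm) of a matrix: the operator norm of the
induced linear map between Euclidean spaces. -/
noncomputable def l2OpNorm {m n : ℕ} (A : Matrix (Fin m) (Fin n) ℝ) : ℝ :=
  ‖LinearMap.toContinuousLinearMap (Matrix.toEuclideanLin A)‖

open scoped Matrix.Norms.L2Operator

lemma l2OpNorm_eq_norm {m n : ℕ} (A : Matrix (Fin m) (Fin n) ℝ) : l2OpNorm A = ‖A‖ := rfl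

lemma wordProd_cons {S : Type*} {Γ : Type*} [Fintype S] [DecidableEq S]
    (M : Γ → Matrix S S ℝ) (a : Γ) (t : List Γ) :
    wordProd M (a :: t) = M a * wordProd M t := by
  simp [wordProd]

lemma wordProd_norm_le {Γ : Type*} {n : ℕ} (M : Γ → Matrix (Fin n) (Fin n) ℝ)
    {m : ℝ} (hM : ∀ a, ‖M a‖ ≤ m) (hm0 : 0 ≤ m) (w : List Γ) (hw : w ≠ []) :
    ‖wordProd M w‖ ≤ m ^ w.length := by
  induction w with
  | nil => exact absurd rfl hw
  | cons a t ih =>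
    rcases eq_or_ne t [] with rfl | ht
    · simpa [wordProd] using hM a
    · rw [wordProd_cons]
      calc ‖M a * wordProd M t‖ ≤ ‖M a‖ * ‖wordProd M t‖ := Matrix.l2_opNorm_mul _ _
      _ ≤ m * m ^ t.length := mul_le_mul (hM a) (ih ht) (norm_nonneg _) hm0
      _ = m ^ (a :: t).length := by rw [List.length_cons, pow_succ']

/-- if `‖M(a)‖₂ ≤ m`, `‖M̃(a)‖₂ ≤ m` and `‖F M(a) − M̃(a) F‖₂ ≤ b`
for all letters `a`, then `‖F M(w) − M̃(w) F‖₂ ≤ b |w| m^{|w|−1}` for every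
nonempty word `w` (and the left-hand side is `0` for the empty word). -/
theorem commutator_word_bound {Γ : Type*} {n nh : ℕ}
    (M : Γ → Matrix (Fin n) (Fin n) ℝ) (Mt : Γ → Matrix (Fin nh) (Fin nh) ℝ)
    (F : Matrix (Fin nh) (Fin n) ℝ) (m b : ℝ) (hm : 0 < m) (hb : 0 ≤ b)
    (hM : ∀ a, l2OpNorm (M a) ≤ m)
    (hMt : ∀ a, l2OpNorm (Mt a) ≤ m)
    (hFb : ∀ a, l2OpNorm (F * M a - Mt a * F) ≤ b) :
    (∀ w : List Γ, w ≠ [] →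
      l2OpNorm (F * wordProd M w - wordProd Mt w * F) ≤
        b * w.length * m ^ (w.length - 1)) ∧
    l2OpNorm (F * wordProd M ([] : List Γ) - wordProd Mt ([] : List Γ) * F) = 0 := by
  have hMn : ∀ a, ‖M a‖ ≤ m := hM
  have hMtn : ∀ a, ‖Mt a‖ ≤ m := hMt
  constructor
  · intro w hw
    induction w with
    | nil => exact absurd rfl hw
    | cons a t ih =>
      simp only [l2OpNorm_eq_norm] at *
      rcases eq_or_ne t [] with rfl | ht
      · simpa [wordProd] using hFb a
      · have key : F * wordProd M (a :: t) - wordProd Mt (a :: t) * F =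
            (F * M a - Mt a * F) * wordProd M t
              + Mt a * (F * wordProd M t - wordProd Mt t * F) := by
          simp only [wordProd_cons]
          rw [Matrix.sub_mul, Matrix.mul_sub, Matrix.mul_assoc F, Matrix.mul_assoc (Mt a) F,
            Matrix.mul_assoc (Mt a) (wordProd Mt t)]
          abel
        have h1 : ‖(F * M a - Mt a * F) * wordProd M t‖ ≤ b * m ^ t.length := by
          calc ‖(F * M a - Mt a * F) * wordProd M t‖
              ≤ ‖F * M a - Mt a * F‖ * ‖wordProd M t‖ := Matrix.l2_opNorm_mul _ _
            _ ≤ b * m ^ t.length :=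
              mul_le_mul (hFb a) (wordProd_norm_le M hMn hm.le t ht)
                (norm_nonneg _) hb
        have h2 : ‖Mt a * (F * wordProd M t - wordProd Mt t * F)‖
            ≤ m * (b * t.length * m ^ (t.length - 1)) := by
          calc ‖Mt a * (F * wordProd M t - wordProd Mt t * F)‖
              ≤ ‖Mt a‖ * ‖F * wordProd M t - wordProd Mt t * F‖ := Matrix.l2_opNorm_mul _ _
            _ ≤ m * (b * t.length * m ^ (t.length - 1)) :=
              mul_le_mul (hMtn a) (ih ht) (norm_nonneg _) hm.le
        have hlen : t.length ≥ 1 := List.length_pos_iff.mpr ht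
        have hpow : m * m ^ (t.length - 1) = m ^ t.length := by
          obtain ⟨k, hk⟩ := Nat.exists_eq_succ_of_ne_zero (by omega : t.length ≠ 0)
          simp [hk, pow_succ']
        calc ‖F * wordProd M (a :: t) - wordProd Mt (a :: t) * F‖
            ≤ ‖(F * M a - Mt a * F) * wordProd M t‖
              + ‖Mt a * (F * wordProd M t - wordProd Mt t * F)‖ := by
              rw [key]; exact norm_add_le _ _
          _ ≤ b * m ^ t.length + m * (b * t.length * m ^ (t.length - 1)) :=
              add_le_add h1 h2
          _ = b * (a :: t).length * m ^ ((a :: t).length - 1) := by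
              rw [List.length_cons]
              have : m * (b * t.length * m ^ (t.length - 1))
                  = b * t.length * (m * m ^ (t.length - 1)) := by ring
              rw [this, hpow]
              push_cast
              ring
  · simp only [wordProd, List.map_nil, List.prod_nil, Matrix.mul_one, Matrix.one_mul,
      sub_self, l2OpNorm_eq_norm, norm_zero]
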